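/- arXiv:1011.2290 — 2 statements merged into one kernel-verified Lean document; each statement's English description precedes it below -/
import Mathlib

section
/- Let (N, μ) be a measure space, E a complex Hilbert space, and C ≥ 0. Let j : ℝ × N → ℝ be such that j(t,x) > 0 for all t, x and, for all s ≤ t and all x ∈ N, e^{-C(t-s)}·j(s,x) ≤ j(t,x) ≤ e^{C(t-s)}·j(s,x). For measurable σ₁, σ₂ : N → E define (σ₁,σ₂)_t := ∫_N ⟨σ₁(x),σ₂(x)⟩ j(t,x) dμ(x) and ‖σ‖_t := ((σ,σ)_t)^{1/2}. If s ≤ t, x ↦ j(t,x) and x ↦ j(s,x) are measurable, and ∫_N ‖σ_i(x)‖² j(s,x) dμ(x) < ∞ for i = 1,2, then |(σ₁,σ₂)_t − (σ₁,σ₂)_s| ≤ (e^{C(t-s)} − 1)·‖σ₁‖_s·‖σ₂‖_s. -/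
/-! Pointwise, `|j(t,x) - j(s,x)| ≤ (e^{C(t-s)} - 1) j(s,x)`: the upper bound gives this directly
and the lower bound gives `1 - e^{-C(t-s)}`, which is smaller since `e^a + e^{-a} ≥ 2`. Pulling
the norm inside the integral and using `|⟨σ₁,σ₂⟩| ≤ ‖σ₁‖ ‖σ₂‖` bounds the difference by
`(e^{C(t-s)} - 1) ∫ ‖σ₁‖ ‖σ₂‖ j(s,·)`, and Cauchy–Schwarz for the weight `j(s,·)` finishes. -/

open MeasureTheory

lemma abs_sub_le_exp_sub_one_mul {a b Δ : ℝ} (ha : 0 ≤ a)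
    (hlow : Real.exp (-Δ) * a ≤ b) (hup : b ≤ Real.exp Δ * a) :
    |b - a| ≤ (Real.exp Δ - 1) * a := by
  have hexp : 1 - Real.exp (-Δ) ≤ Real.exp Δ - 1 := by
    nlinarith [Real.add_one_le_exp Δ, Real.add_one_le_exp (-Δ)]
  rw [abs_le]
  constructor <;> nlinarith

lemma norm_inner_mul_ofReal_le {𝕜 E : Type*} [RCLike 𝕜] [NormedAddCommGroup E]
    [InnerProductSpace 𝕜 E] (a b : E) {r c w : ℝ} (hr : |r| ≤ c * w) :
    ‖inner 𝕜 a b * (r : 𝕜)‖ ≤ c * (‖a‖ * ‖b‖ * w) := by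
  rw [norm_mul, RCLike.norm_ofReal]
  calc ‖inner 𝕜 a b‖ * |r| ≤ ‖a‖ * ‖b‖ * (c * w) :=
        mul_le_mul (norm_inner_le_norm a b) hr (abs_nonneg r) (by positivity)
    _ = c * (‖a‖ * ‖b‖ * w) := by ring

section WeightedIntegral

variable {N : Type*} [MeasurableSpace N] {μ : Measure N} {f g w : N → ℝ}

lemma memLp_two_mul_sqrt (hf : AEStronglyMeasurable f μ) (hw : AEStronglyMeasurable w μ)
    (hw_nonneg : ∀ x, 0 ≤ w x) (hf_sq : Integrable (fun x => f x ^ 2 * w x) μ) :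
    MemLp (fun x => f x * √(w x)) 2 μ := by
  refine (memLp_two_iff_integrable_sq
    (hf.mul (Real.continuous_sqrt.comp_aestronglyMeasurable hw))).2 ?_
  simpa only [Pi.mul_apply, mul_pow, Real.sq_sqrt (hw_nonneg _)] using hf_sq

lemma integrable_mul_mul_of_integrable_sq_mul (hf : AEStronglyMeasurable f μ)
    (hg : AEStronglyMeasurable g μ) (hw : AEStronglyMeasurable w μ) (hw_nonneg : ∀ x, 0 ≤ w x)
    (hf_sq : Integrable (fun x => f x ^ 2 * w x) μ)
    (hg_sq : Integrable (fun x => g x ^ 2 * w x) μ) :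
    Integrable (fun x => f x * g x * w x) μ := by
  have hprod := (memLp_two_mul_sqrt hf hw hw_nonneg hf_sq).integrable_mul
    (memLp_two_mul_sqrt hg hw hw_nonneg hg_sq)
  refine hprod.congr (Filter.Eventually.of_forall fun x => ?_)
  simp only [Pi.mul_apply]
  linear_combination f x * g x * Real.sq_sqrt (hw_nonneg x)

lemma integral_mul_mul_le_sqrt_mul_sqrt (hf : AEStronglyMeasurable f μ)
    (hg : AEStronglyMeasurable g μ) (hw : AEStronglyMeasurable w μ) (hf_nonneg : ∀ x, 0 ≤ f x)
    (hg_nonneg : ∀ x, 0 ≤ g x) (hw_nonneg : ∀ x, 0 ≤ w x)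
    (hf_sq : Integrable (fun x => f x ^ 2 * w x) μ)
    (hg_sq : Integrable (fun x => g x ^ 2 * w x) μ) :
    ∫ x, f x * g x * w x ∂μ ≤ √(∫ x, f x ^ 2 * w x ∂μ) * √(∫ x, g x ^ 2 * w x ∂μ) := by
  have holder := integral_mul_le_Lp_mul_Lq_of_nonneg Real.HolderConjugate.two_two
    (f := fun x => f x * √(w x)) (g := fun x => g x * √(w x))
    (Filter.Eventually.of_forall fun x => mul_nonneg (hf_nonneg x) (Real.sqrt_nonneg _))
    (Filter.Eventually.of_forall fun x => mul_nonneg (hg_nonneg x) (Real.sqrt_nonneg _))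
    (by simpa using memLp_two_mul_sqrt hf hw hw_nonneg hf_sq)
    (by simpa using memLp_two_mul_sqrt hg hw hw_nonneg hg_sq)
  have hprod : ∀ x, f x * √(w x) * (g x * √(w x)) = f x * g x * w x := fun x => by
    linear_combination f x * g x * Real.sq_sqrt (hw_nonneg x)
  simp only [Real.rpow_two, mul_pow, Real.sq_sqrt (hw_nonneg _), hprod] at holder
  simpa only [Real.sqrt_eq_rpow] using holder

variable {𝕜 E : Type*} [RCLike 𝕜] [NormedAddCommGroup E] [InnerProductSpace 𝕜 E]
  {σ₁ σ₂ : N → E} {v : N → ℝ} {c : ℝ}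

lemma integrable_inner_mul_ofReal_of_abs_le (hσ₁ : AEStronglyMeasurable σ₁ μ)
    (hσ₂ : AEStronglyMeasurable σ₂ μ) (hv : AEStronglyMeasurable v μ)
    (hg : Integrable (fun x => ‖σ₁ x‖ * ‖σ₂ x‖ * w x) μ) (hvw : ∀ x, |v x| ≤ c * w x) :
    Integrable (fun x => inner 𝕜 (σ₁ x) (σ₂ x) * (v x : 𝕜)) μ :=
  (hg.const_mul c).mono'
    ((hσ₁.inner hσ₂).mul (RCLike.continuous_ofReal.comp_aestronglyMeasurable hv))
    (Filter.Eventually.of_forall fun x => norm_inner_mul_ofReal_le _ _ (hvw x))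

lemma norm_integral_inner_mul_ofReal_le (hg : Integrable (fun x => ‖σ₁ x‖ * ‖σ₂ x‖ * w x) μ)
    (hvw : ∀ x, |v x| ≤ c * w x) :
    ‖∫ x, inner 𝕜 (σ₁ x) (σ₂ x) * (v x : 𝕜) ∂μ‖ ≤ c * ∫ x, ‖σ₁ x‖ * ‖σ₂ x‖ * w x ∂μ := by
  rw [← integral_const_mul]
  exact norm_integral_le_of_norm_le (hg.const_mul c)
    (Filter.Eventually.of_forall fun x => norm_inner_mul_ofReal_le _ _ (hvw x))

lemma norm_integral_inner_mul_ofReal_sub_le {w₀ w₁ : N → ℝ} {ε : ℝ}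
    (hσ₁ : AEStronglyMeasurable σ₁ μ) (hσ₂ : AEStronglyMeasurable σ₂ μ)
    (hw₀ : AEStronglyMeasurable w₀ μ) (hw₁ : AEStronglyMeasurable w₁ μ)
    (hw₀_nonneg : ∀ x, 0 ≤ w₀ x) (hε : 0 ≤ ε) (hdiff : ∀ x, |w₁ x - w₀ x| ≤ ε * w₀ x)
    (hint₁ : Integrable (fun x => ‖σ₁ x‖ ^ 2 * w₀ x) μ)
    (hint₂ : Integrable (fun x => ‖σ₂ x‖ ^ 2 * w₀ x) μ) :
    ‖(∫ x, inner 𝕜 (σ₁ x) (σ₂ x) * (w₁ x : 𝕜) ∂μ) - ∫ x, inner 𝕜 (σ₁ x) (σ₂ x) * (w₀ x : 𝕜) ∂μ‖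
      ≤ ε * √(∫ x, ‖σ₁ x‖ ^ 2 * w₀ x ∂μ) * √(∫ x, ‖σ₂ x‖ ^ 2 * w₀ x ∂μ) := by
  have hg := integrable_mul_mul_of_integrable_sq_mul hσ₁.norm hσ₂.norm hw₀ hw₀_nonneg hint₁ hint₂
  have hI₀ : Integrable (fun x => inner 𝕜 (σ₁ x) (σ₂ x) * (w₀ x : 𝕜)) μ :=
    integrable_inner_mul_ofReal_of_abs_le (c := 1) hσ₁ hσ₂ hw₀ hg fun x => by
      rw [one_mul, abs_of_nonneg (hw₀_nonneg x)]
  have hI₁ : Integrable (fun x => inner 𝕜 (σ₁ x) (σ₂ x) * (w₁ x : 𝕜)) μ :=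
    integrable_inner_mul_ofReal_of_abs_le (c := 1 + ε) hσ₁ hσ₂ hw₁ hg fun x => by
      have hrev := abs_sub_abs_le_abs_sub (w₁ x) (w₀ x)
      rw [abs_of_nonneg (hw₀_nonneg x)] at hrev
      linarith [hdiff x]
  calc _ = ‖∫ x, inner 𝕜 (σ₁ x) (σ₂ x) * ((w₁ x - w₀ x : ℝ) : 𝕜) ∂μ‖ := by
        rw [← integral_sub hI₁ hI₀]
        simp only [RCLike.ofReal_sub, mul_sub]
    _ ≤ ε * ∫ x, ‖σ₁ x‖ * ‖σ₂ x‖ * w₀ x ∂μ := norm_integral_inner_mul_ofReal_le hg hdiff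
    _ ≤ ε * (√(∫ x, ‖σ₁ x‖ ^ 2 * w₀ x ∂μ) * √(∫ x, ‖σ₂ x‖ ^ 2 * w₀ x ∂μ)) :=
        mul_le_mul_of_nonneg_left (integral_mul_mul_le_sqrt_mul_sqrt hσ₁.norm hσ₂.norm hw₀
          (fun x => norm_nonneg _) (fun x => norm_nonneg _) hw₀_nonneg hint₁ hint₂) hε
    _ = _ := (mul_assoc _ _ _).symm

end WeightedIntegral

theorem stmt0 {N : Type*} [MeasurableSpace N] (μ : Measure N)
    {E : Type*} [NormedAddCommGroup E] [InnerProductSpace ℂ E]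
    (C : ℝ) (hC : 0 ≤ C) (j : ℝ × N → ℝ)
    (hpos : ∀ t x, 0 < j (t, x))
    (hbound : ∀ s t : ℝ, s ≤ t → ∀ x,
      Real.exp (-C * (t - s)) * j (s, x) ≤ j (t, x) ∧
        j (t, x) ≤ Real.exp (C * (t - s)) * j (s, x))
    (σ₁ σ₂ : N → E)
    (hσ₁ : AEStronglyMeasurable σ₁ μ) (hσ₂ : AEStronglyMeasurable σ₂ μ)
    (s t : ℝ) (hst : s ≤ t)
    (hjt : Measurable fun x => j (t, x)) (hjs : Measurable fun x => j (s, x))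
    (hint₁ : Integrable (fun x => ‖σ₁ x‖ ^ 2 * j (s, x)) μ)
    (hint₂ : Integrable (fun x => ‖σ₂ x‖ ^ 2 * j (s, x)) μ) :
    ‖(∫ x, (inner ℂ (σ₁ x) (σ₂ x) : ℂ) * (j (t, x) : ℂ) ∂μ)
        - ∫ x, (inner ℂ (σ₁ x) (σ₂ x) : ℂ) * (j (s, x) : ℂ) ∂μ‖
      ≤ (Real.exp (C * (t - s)) - 1)
        * Real.sqrt (∫ x, ‖σ₁ x‖ ^ 2 * j (s, x) ∂μ)
        * Real.sqrt (∫ x, ‖σ₂ x‖ ^ 2 * j (s, x) ∂μ) := by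
  have hε : 0 ≤ Real.exp (C * (t - s)) - 1 :=
    sub_nonneg.2 (Real.one_le_exp (mul_nonneg hC (sub_nonneg.2 hst)))
  refine norm_integral_inner_mul_ofReal_sub_le hσ₁ hσ₂ hjs.aestronglyMeasurable
    hjt.aestronglyMeasurable (fun x => (hpos s x).le) hε (fun x => ?_) hint₁ hint₂
  obtain ⟨hlow, hup⟩ := hbound s t hst x
  exact abs_sub_le_exp_sub_one_mul (hpos s x).le (by rwa [neg_mul] at hlow) hup
end

section
/- For every even integer n ≥ 2, one has Σ_{0 ≤ k < l ≤ n} (−1)^k · C(n,k) · C(n,l) · (l − k) = n · (−1)^{n/2} · (C(n−2, n/2) − C(n−2, n/2 − 1)), where C(a,b) denotes the binomial coefficient and the sum is over all pairs of integers (k,l) with 0 ≤ k < l ≤ n. -/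
/-!
Summation by parts turns the inner sum into iterated partial alternating sums of binomial
coefficients, which collapse by Pascal's rule: for `n = N + 2` the left side becomes
`∑ j, (-1)^j C(N+2, j+1) C(N, j)`, the coefficient of `X^(N+1)` in
`(1 + X)^(N+2) (1 - X)^N = (1 + X)^2 (1 - X^2)^N`. For `N = 2p` only the middle term `2X` of
`(1 + X)^2` reaches this odd degree, which gives `2 (-1)^p C(2p, p)`; finally
`(p + 1) (C(2p, p) - C(2p, p+1)) = C(2p, p)` puts this in the stated form.
-/

open Finset Polynomial

theorem sum_range_mul_sub_eq_sum_range_sum {R : Type*} [CommRing R] (f : ℕ → R) (l : ℕ) :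
    ∑ k ∈ range l, f k * ((l : R) - k) = ∑ i ∈ range l, ∑ k ∈ range (i + 1), f k := by
  induction l with
  | zero => simp
  | succ l ih =>
    rw [sum_range_succ (fun i => ∑ k ∈ range (i + 1), f k), ← ih, sum_range_succ f,
      sum_range_succ, ← add_assoc, ← sum_add_distrib]
    push_cast
    congr 1
    · exact sum_congr rfl fun k _ => by ring
    · ring

theorem sum_range_neg_one_pow_mul_choose_mul_sub (N l : ℕ) :
    ∑ k ∈ range (l + 1), (-1 : ℤ) ^ k * (N + 2).choose k * ((l + 1 : ℕ) - k : ℤ)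
      = (-1) ^ l * N.choose l := by
  rw [sum_range_mul_sub_eq_sum_range_sum]
  simp only [Int.alternating_sum_range_choose_eq_choose]

theorem sum_sum_neg_one_pow_mul_choose_mul_choose_mul_sub (N : ℕ) :
    ∑ l ∈ range (N + 2 + 1), ∑ k ∈ range l,
        (-1 : ℤ) ^ k * (N + 2).choose k * (N + 2).choose l * ((l : ℤ) - k)
      = ∑ j ∈ range (N + 2), (-1 : ℤ) ^ j * (N + 2).choose (j + 1) * N.choose j := by
  have hfactor (l : ℕ) : ∑ k ∈ range l,
        (-1 : ℤ) ^ k * (N + 2).choose k * (N + 2).choose l * ((l : ℤ) - k)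
      = (N + 2).choose l * ∑ k ∈ range l, (-1 : ℤ) ^ k * (N + 2).choose k * ((l : ℤ) - k) := by
    rw [mul_sum]
    exact sum_congr rfl fun k _ => by ring
  simp only [hfactor]
  rw [sum_range_succ', range_zero, sum_empty, mul_zero, add_zero]
  refine sum_congr rfl fun j _ => ?_
  rw [sum_range_neg_one_pow_mul_choose_mul_sub]
  ring

theorem Polynomial.coeff_one_sub_X_pow (R : Type*) [CommRing R] (m k : ℕ) :
    ((1 - X : R[X]) ^ m).coeff k = (-1) ^ k * m.choose k := by
  induction m generalizing k with
  | zero => rcases k with _ | k <;> simp [coeff_one]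
  | succ m ih =>
    rcases k with _ | k
    · simp [pow_succ, mul_sub, ih 0]
    · rw [pow_succ, mul_sub, mul_one, coeff_sub, coeff_mul_X, ih, ih, Nat.choose_succ_succ']
      push_cast
      ring

theorem Polynomial.coeff_one_add_X_sq_mul_expand_two_odd {R : Type*} [CommRing R]
    (q : R[X]) (p : ℕ) :
    ((1 + X) ^ 2 * expand R 2 q).coeff (2 * p + 1) = 2 * q.coeff p := by
  have hsplit : (1 + X : R[X]) ^ 2 * expand R 2 q
      = expand R 2 ((1 + X) * q) + C 2 * (expand R 2 q * X) := by
    simp only [map_mul, map_add, map_one, expand_X, C_ofNat]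
    ring
  rw [hsplit, coeff_add, coeff_expand two_pos, if_neg (by omega), coeff_C_mul, coeff_mul_X,
    coeff_expand_mul' two_pos, zero_add]

theorem sum_range_neg_one_pow_mul_choose_succ_mul_choose (p : ℕ) :
    ∑ j ∈ range (2 * p + 2), (-1 : ℤ) ^ j * (2 * p + 2).choose (j + 1) * (2 * p).choose j
      = 2 * ((-1) ^ p * (2 * p).choose p) := by
  have hcoeff : ∑ j ∈ range (2 * p + 2),
        (-1 : ℤ) ^ j * (2 * p + 2).choose (j + 1) * (2 * p).choose j
      = ((1 + X : ℤ[X]) ^ (2 * p + 2) * (1 - X) ^ (2 * p)).coeff (2 * p + 1) := by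
    rw [coeff_mul, ← Nat.sum_antidiagonal_swap, Nat.sum_antidiagonal_eq_sum_range_succ_mk]
    refine sum_congr rfl fun j hj => ?_
    have hj : j < 2 * p + 2 := mem_range.mp hj
    rw [Prod.swap_prod_mk, coeff_one_add_X_pow, coeff_one_sub_X_pow,
      show 2 * p + 1 - j = 2 * p + 2 - (j + 1) by omega, Nat.choose_symm (by omega)]
    ring
  have hfactor : (1 + X : ℤ[X]) ^ (2 * p + 2) * (1 - X) ^ (2 * p)
      = (1 + X) ^ 2 * expand ℤ 2 ((1 - X) ^ (2 * p)) := by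
    rw [map_pow, map_sub, map_one, expand_X, pow_add, mul_comm, ← mul_assoc, ← mul_pow]
    ring
  rw [hcoeff, hfactor, coeff_one_add_X_sq_mul_expand_two_odd, coeff_one_sub_X_pow]

theorem succ_mul_choose_two_mul_sub_choose_succ (m : ℕ) :
    ((m : ℤ) + 1) * ((2 * m).choose m - (2 * m).choose (m + 1)) = (2 * m).choose m := by
  have h : ((2 * m).choose (m + 1) : ℤ) * (m + 1) = (2 * m).choose m * m := by
    have h := Nat.choose_succ_right_eq (2 * m) m
    rw [show 2 * m - m = m by omega] at h
    exact_mod_cast h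
  linear_combination -h

theorem stmt18 (n : ℕ) (hn : 2 ≤ n) (heven : Even n) :
    ∑ l ∈ Finset.range (n + 1), ∑ k ∈ Finset.range l,
        (-1 : ℤ) ^ k * (n.choose k : ℤ) * (n.choose l : ℤ) * ((l : ℤ) - (k : ℤ))
      = (n : ℤ) * ((-1 : ℤ) ^ (n / 2)
        * (((n - 2).choose (n / 2) : ℤ) - ((n - 2).choose (n / 2 - 1) : ℤ))) := by
  obtain ⟨m, rfl⟩ : ∃ m, n = 2 * m + 2 := ⟨n / 2 - 1, by rcases heven with ⟨q, rfl⟩; omega⟩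
  rw [sum_sum_neg_one_pow_mul_choose_mul_choose_mul_sub,
    sum_range_neg_one_pow_mul_choose_succ_mul_choose,
    show (2 * m + 2) / 2 = m + 1 by omega, Nat.add_sub_cancel, Nat.add_sub_cancel]
  push_cast
  linear_combination (-2 * (-1 : ℤ) ^ m) * succ_mul_choose_two_mul_sub_choose_succ m
end
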